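/- Let B be a nonempty subset of Baire space ℕ → ℕ and let (≤_i)_{i<ω} be a quasi-scale on B. Define recursively a decreasing sequence of sets B_0 ⊇ B_1 ⊇ B_2 ⊇ ⋯ by: B_0 = B, and B_{n+1} = { x ∈ B_n : x is ≤_n-least in B_n (i.e., x ≤_n y for all y ∈ B_n), and x(n) is least possible among the ≤_n-least elements of B_n (i.e., x(n) ≤ y(n) for every y ∈ B_n that is ≤_n-least in B_n) }. Then: (a) each B_n is nonempty; (b) for every n, all elements of B_{n+1} agree on the coordinates 0, 1, …, n, so there is a well-defined real x* ∈ ℕ → ℕ with x*(n) equal to the common value x(n) for x ∈ B_{n+1}; (c) x* ∈ B; and (d) for every i < ω and every z ∈ B_{i+1}, x* ≤_i z. -/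

import Mathlib

/-- A quasi-norm on a set `B` of reals (elements of Baire space `ℕ → ℕ`):
a reflexive, transitive, total binary relation on `B` such that there is no
infinite strictly descending chain, where `x < y` means `le x y ∧ ¬ le y x`. -/
def IsQuasiNorm (B : Set (ℕ → ℕ)) (le : (ℕ → ℕ) → (ℕ → ℕ) → Prop) : Prop :=
  (∀ x ∈ B, le x x) ∧
  (∀ x ∈ B, ∀ y ∈ B, ∀ z ∈ B, le x y → le y z → le x z) ∧
  (∀ x ∈ B, ∀ y ∈ B, le x y ∨ le y x) ∧
  ¬ ∃ f : ℕ → (ℕ → ℕ), (∀ n, f n ∈ B) ∧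
      ∀ n, le (f (n + 1)) (f n) ∧ ¬ le (f n) (f (n + 1))

/-- A quasi-scale on `B`: a sequence of quasi-norms `le i` on `B` satisfying the
limit property and lower semi-continuity. -/
def IsQuasiScale (B : Set (ℕ → ℕ)) (le : ℕ → (ℕ → ℕ) → (ℕ → ℕ) → Prop) : Prop :=
  (∀ i, IsQuasiNorm B (le i)) ∧
  ∀ (x : ℕ → (ℕ → ℕ)) (y : ℕ → ℕ) (n : ℕ → ℕ),
    (∀ k, x k ∈ B) →
    (∀ j, ∃ N, ∀ k ≥ N, x k j = y j) →
    (∀ i, ∀ k ≥ n i, le i (x k) (x (n i)) ∧ le i (x (n i)) (x k)) →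
    y ∈ B ∧ ∀ i, le i y (x (n i))

/-!
Each quasi-norm is total and well-founded, so every nonempty subset of `B` has a `≤ₙ`-least
element, and among those one with least `n`-th coordinate; hence every `Bₙ` is nonempty.
Picking `wₙ ∈ Bₙ₊₁`, the sequence `w` converges to its diagonal `x*` and is `≤ᵢ`-constant
from `i` on, so the quasi-scale puts `x*` in `B` with `x* ≤ᵢ wᵢ`, and `wᵢ` is `≤ᵢ`-least in `Bᵢ`.
-/

theorem IsQuasiNorm.wellFounded {B : Set (ℕ → ℕ)} {le : (ℕ → ℕ) → (ℕ → ℕ) → Prop}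
    (h : IsQuasiNorm B le) : WellFounded fun x y : B => le x y ∧ ¬ le y x :=
  wellFounded_iff_isEmpty_descending_chain.mpr
    ⟨fun ⟨f, hf⟩ => h.2.2.2 ⟨fun n => f n, fun n => (f n).2, hf⟩⟩

theorem IsQuasiNorm.exists_forall_le {B S : Set (ℕ → ℕ)} {le : (ℕ → ℕ) → (ℕ → ℕ) → Prop}
    (h : IsQuasiNorm B le) (hSB : S ⊆ B) (hS : S.Nonempty) : ∃ x ∈ S, ∀ y ∈ S, le x y := by
  obtain ⟨s, hs⟩ := hS
  obtain ⟨⟨x, hxB⟩, hx, hmin⟩ :=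
    h.wellFounded.has_min {x : B | (x : ℕ → ℕ) ∈ S} ⟨⟨s, hSB hs⟩, hs⟩
  refine ⟨x, hx, fun y hy => ?_⟩
  by_contra hxy
  exact hmin ⟨y, hSB hy⟩ hy ⟨(h.2.2.1 x hxB y (hSB hy)).resolve_left hxy, hxy⟩

def IsLeftmostMinNormSeq (le : ℕ → (ℕ → ℕ) → (ℕ → ℕ) → Prop) (Bs : ℕ → Set (ℕ → ℕ)) : Prop :=
  ∀ n, Bs (n + 1) =
    { x ∈ Bs n | (∀ y ∈ Bs n, le n x y) ∧ ∀ y ∈ Bs n, (∀ z ∈ Bs n, le n y z) → x n ≤ y n }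

namespace IsLeftmostMinNormSeq

variable {le : ℕ → (ℕ → ℕ) → (ℕ → ℕ) → Prop} {Bs : ℕ → Set (ℕ → ℕ)}
  {n : ℕ} {x y : ℕ → ℕ}

theorem antitone (h : IsLeftmostMinNormSeq le Bs) : Antitone Bs :=
  antitone_nat_of_succ_le fun n x hx => by rw [h n] at hx; exact hx.1

theorem le_of_mem_succ (h : IsLeftmostMinNormSeq le Bs) (hx : x ∈ Bs (n + 1)) (hy : y ∈ Bs n) :
    le n x y := by
  rw [h n] at hx
  exact hx.2.1 y hy

theorem apply_eq_of_mem_succ (h : IsLeftmostMinNormSeq le Bs) (hx : x ∈ Bs (n + 1))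
    (hy : y ∈ Bs (n + 1)) : x n = y n := by
  rw [h n] at hx hy
  exact le_antisymm (hx.2.2 y hy.1 hy.2.1) (hy.2.2 x hx.1 hx.2.1)

theorem apply_eq_of_le (h : IsLeftmostMinNormSeq le Bs) {m : ℕ} (hmn : m ≤ n)
    (hx : x ∈ Bs (n + 1)) (hy : y ∈ Bs (n + 1)) : x m = y m :=
  have hsub := h.antitone (Nat.succ_le_succ hmn)
  h.apply_eq_of_mem_succ (hsub hx) (hsub hy)

theorem succ_nonempty (h : IsLeftmostMinNormSeq le Bs) (hleast : ∃ x ∈ Bs n, ∀ y ∈ Bs n, le n x y) :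
    (Bs (n + 1)).Nonempty := by
  obtain ⟨x, ⟨hx, hxle⟩, hmin⟩ := (measure fun x : ℕ → ℕ => x n).wf.has_min
    {x | x ∈ Bs n ∧ ∀ y ∈ Bs n, le n x y} hleast
  refine ⟨x, ?_⟩
  rw [h n]
  exact ⟨hx, hxle, fun y hy hyle => not_lt.1 (hmin y ⟨hy, hyle⟩)⟩

theorem subset_zero (h : IsLeftmostMinNormSeq le Bs) (n : ℕ) : Bs n ⊆ Bs 0 :=
  h.antitone n.zero_le

theorem nonempty {B : Set (ℕ → ℕ)} (h : IsLeftmostMinNormSeq le Bs) (h0 : Bs 0 = B)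
    (hB : B.Nonempty) (hqn : ∀ i, IsQuasiNorm B (le i)) (n : ℕ) : (Bs n).Nonempty := by
  induction n with
  | zero => exact h0 ▸ hB
  | succ n ih => exact h.succ_nonempty ((hqn n).exists_forall_le (h0 ▸ h.subset_zero n) ih)

theorem exists_limit {B : Set (ℕ → ℕ)} (h : IsLeftmostMinNormSeq le Bs) (h0 : Bs 0 = B)
    (hqs : IsQuasiScale B le) (hne : ∀ n, (Bs n).Nonempty) :
    ∃ xstar : ℕ → ℕ, (∀ n, ∀ x ∈ Bs (n + 1), xstar n = x n) ∧ xstar ∈ B ∧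
      ∀ i, ∀ z ∈ Bs (i + 1), le i xstar z := by
  choose w hw using fun n => hne (n + 1)
  have hB : ∀ n, Bs n ⊆ B := fun n => h0 ▸ h.subset_zero n
  have hw_mem : ∀ {i k}, i ≤ k → w k ∈ Bs (i + 1) := fun hik =>
    h.antitone (Nat.succ_le_succ hik) (hw _)
  have hval : ∀ n, ∀ x ∈ Bs (n + 1), w n n = x n := fun n x hx =>
    h.apply_eq_of_mem_succ (hw n) hx
  -- `w` converges to its diagonal, and from stage `i` on it is `≤ᵢ`-constant
  obtain ⟨hmem, hlsc⟩ := hqs.2 w (fun n => w n n) id (fun k => hB (k + 1) (hw k))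
    (fun j => ⟨j, fun k hjk => (hval j (w k) (hw_mem hjk)).symm⟩)
    (fun i k hik => ⟨h.le_of_mem_succ (hw_mem hik) (h.antitone i.le_succ (hw i)),
      h.le_of_mem_succ (hw i) (h.antitone i.le_succ (hw_mem hik))⟩)
  refine ⟨fun n => w n n, hval, hmem, fun i z hz => ?_⟩
  have hzi : z ∈ Bs i := h.antitone i.le_succ hz
  exact (hqs.1 i).2.1 _ hmem _ (hB _ (hw i)) _ (hB i hzi) (hlsc i) (h.le_of_mem_succ (hw i) hzi)

end IsLeftmostMinNormSeq

/-- The "leftmost branch of minimal norms" construction: given a nonempty set `B`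
carrying a quasi-scale, the recursively defined decreasing sequence of sets
`Bs 0 = B`, `Bs (n+1) = { x ∈ Bs n : x is ≤ₙ-least in Bs n and x n is least
possible among the ≤ₙ-least elements of Bs n }` consists of nonempty sets, the
elements of `Bs (n+1)` all agree on coordinates `0, …, n`, and the resulting real
`x*` lies in `B` and satisfies `x* ≤ᵢ z` for all `z ∈ Bs (i+1)`. -/
theorem leftmost_branch_of_minimal_norms
    (B : Set (ℕ → ℕ)) (le : ℕ → (ℕ → ℕ) → (ℕ → ℕ) → Prop)
    (hB : B.Nonempty) (hqs : IsQuasiScale B le)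
    (Bs : ℕ → Set (ℕ → ℕ))
    (h0 : Bs 0 = B)
    (hsucc : ∀ n, Bs (n + 1) =
      { x ∈ Bs n | (∀ y ∈ Bs n, le n x y) ∧
          ∀ y ∈ Bs n, (∀ z ∈ Bs n, le n y z) → x n ≤ y n }) :
    (∀ n, (Bs n).Nonempty) ∧
    (∀ n, ∀ x ∈ Bs (n + 1), ∀ y ∈ Bs (n + 1), ∀ m ≤ n, x m = y m) ∧
    ∃ xstar : ℕ → ℕ,
      (∀ n, ∀ x ∈ Bs (n + 1), xstar n = x n) ∧
      xstar ∈ B ∧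
      ∀ i, ∀ z ∈ Bs (i + 1), le i xstar z := by
  have hBs : IsLeftmostMinNormSeq le Bs := hsucc
  have hne : ∀ n, (Bs n).Nonempty := hBs.nonempty h0 hB hqs.1
  exact ⟨hne, fun n x hx y hy m hm => hBs.apply_eq_of_le hm hx hy, hBs.exists_limit h0 hqs hne⟩
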